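/- arXiv:1106.5275 — 2 statements merged into one kernel-verified Lean document; each statement's English description precedes it below -/
import Mathlib

section
/- If the linear function E(X) = ⟨G,X⟩ + c is bounded below on the closed convex set C and X_{k+1} = P_C(X_k − αG) with X_0 ∈ C, then ‖X_{k+1} − X_k‖ → 0 as k → ∞. -/
open scoped RealInnerProductSpace

/-- If E(X) = ⟨G,X⟩ + c is bounded below on C (a minimizer exists), then the
successive differences of the projected gradient iterates tend to 0. -/
theorem projected_gradient_successive_differences_tendsto_zero
    {H : Type*} [NormedAddCommGroup H] [InnerProductSpace ℝ H]
    [FiniteDimensional ℝ H] (C : Set H) (hne : C.Nonempty)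
    (hclosed : IsClosed C) (hconv : Convex ℝ C)
    (P : H → H) (hP : ∀ Y : H, P Y ∈ C ∧ ∀ Z ∈ C, ‖Y - P Y‖ ≤ ‖Y - Z‖)
    (G : H) (c : ℝ) (α : ℝ) (hα : 0 < α)
    (Xbar : H) (hXbar : Xbar ∈ C)
    (hmin : ∀ Y ∈ C, ⟪G, Xbar⟫ + c ≤ ⟪G, Y⟫ + c)
    (X : ℕ → H) (hX0 : X 0 ∈ C)
    (hiter : ∀ k : ℕ, X (k + 1) = P (X k - α • G)) :
    Filter.Tendsto (fun k : ℕ => ‖X (k + 1) - X k‖) Filter.atTop (nhds 0) := by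
  have hmem : ∀ k, X k ∈ C := by
    intro k; induction k with
    | zero => exact hX0
    | succ n ih => rw [hiter]; exact (hP _).1
  -- variational inequality for the projection
  have hvar : ∀ Y : H, ∀ Z ∈ C, ⟪Y - P Y, Z - P Y⟫ ≤ 0 := by
    intro Y
    have : Nonempty C := hne.to_subtype
    have h1 : ‖Y - P Y‖ = ⨅ w : C, ‖Y - w‖ := by
      apply le_antisymm
      · exact le_ciInf fun w => (hP Y).2 w w.2
      · exact ciInf_le ⟨0, by rintro x ⟨w, rfl⟩; exact norm_nonneg _⟩
          (⟨P Y, (hP Y).1⟩ : C)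
    exact (norm_eq_iInf_iff_real_inner_le_zero hconv (hP Y).1).mp h1
  set E : H → ℝ := fun Y => ⟪G, Y⟫ + c with hE
  have hkey : ∀ k, ‖X (k + 1) - X k‖ ^ 2 ≤ α * (E (X k) - E (X (k + 1))) := by
    intro k
    have h := hvar (X k - α • G) (X k) (hmem k)
    rw [← hiter k] at h
    have e1 : X k - α • G - X (k + 1) = (X k - X (k + 1)) - α • G := by abel
    rw [e1, inner_sub_left, real_inner_smul_left, real_inner_self_eq_norm_sq] at h
    have e2 : E (X k) - E (X (k + 1)) = ⟪G, X k - X (k + 1)⟫ := by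
      simp [hE, inner_sub_right]
    rw [norm_sub_rev, e2]
    linarith
  have hanti : Antitone (fun k => E (X k)) := by
    apply antitone_nat_of_succ_le
    intro k
    have h1 := hkey k
    have h2 : (0:ℝ) ≤ ‖X (k + 1) - X k‖ ^ 2 := sq_nonneg _
    nlinarith
  have hbdd : BddBelow (Set.range fun k => E (X k)) := by
    refine ⟨E Xbar, ?_⟩
    rintro x ⟨k, rfl⟩
    exact hmin (X k) (hmem k)
  have hlim := tendsto_atTop_ciInf hanti hbdd
  have hlim' : Filter.Tendsto (fun k => E (X (k + 1))) Filter.atTop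
      (nhds (⨅ k, E (X k))) :=
    hlim.comp (Filter.tendsto_add_atTop_nat 1)
  have hdiff : Filter.Tendsto (fun k => α * (E (X k) - E (X (k + 1))))
      Filter.atTop (nhds 0) := by
    have := (hlim.sub hlim').const_mul α
    simpa using this
  have hsq : Filter.Tendsto (fun k => ‖X (k + 1) - X k‖ ^ 2) Filter.atTop (nhds 0) := by
    refine squeeze_zero (fun k => sq_nonneg _) hkey hdiff
  have := hsq.sqrt
  rw [Real.sqrt_zero] at this
  convert this using 2 with k
  rw [Real.sqrt_sq (norm_nonneg _)]
end

section
/- Convergence of projected gradient for linear objectives: if E(X) = ⟨G,X⟩ + c is bounded below on the nonempty closed convex set C and X_{k+1} = P_C(X_k − αG) with X_0 ∈ C, α > 0, then E(X_k) converges to E* = min_{X∈C} E(X). -/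
open scoped RealInnerProductSpace

/-- Convergence of the projected gradient method for linear objectives:
E(X_k) converges to the minimum of E over C. -/
theorem projected_gradient_converges_to_min
    {H : Type*} [NormedAddCommGroup H] [InnerProductSpace ℝ H]
    [FiniteDimensional ℝ H] (C : Set H) (hne : C.Nonempty)
    (hclosed : IsClosed C) (hconv : Convex ℝ C)
    (P : H → H) (hP : ∀ Y : H, P Y ∈ C ∧ ∀ Z ∈ C, ‖Y - P Y‖ ≤ ‖Y - Z‖)
    (G : H) (c : ℝ) (α : ℝ) (hα : 0 < α)
    (Xbar : H) (hXbar : Xbar ∈ C)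
    (hmin : ∀ Z ∈ C, ⟪G, Xbar⟫ + c ≤ ⟪G, Z⟫ + c)
    (X : ℕ → H) (hX0 : X 0 ∈ C)
    (hiter : ∀ k : ℕ, X (k + 1) = P (X k - α • G)) :
    Filter.Tendsto (fun k : ℕ => ⟪G, X k⟫ + c) Filter.atTop
      (nhds (⟪G, Xbar⟫ + c)) := by
  -- variational inequality for the projection
  have hvar : ∀ Y : H, ∀ Z ∈ C, ⟪Y - P Y, Z - P Y⟫ ≤ 0 := by
    intro Y
    have hPY := (hP Y).1
    have heq : ‖Y - P Y‖ = ⨅ w : C, ‖Y - w‖ := by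
      haveI : Nonempty C := hne.to_subtype
      refine le_antisymm (le_ciInf fun w => (hP Y).2 w w.2) ?_
      exact ciInf_le ⟨0, fun _ ⟨_, h⟩ => h ▸ norm_nonneg _⟩ (⟨P Y, hPY⟩ : C)
    exact (norm_eq_iInf_iff_real_inner_le_zero hconv hPY).1 heq
  have hmem : ∀ k, X k ∈ C := by
    intro k
    cases k with
    | zero => exact hX0
    | succ n => rw [hiter n]; exact (hP _).1
  -- e k ≥ 0
  set e : ℕ → ℝ := fun k => ⟪G, X k⟫ - ⟪G, Xbar⟫ with he
  have he_nonneg : ∀ k, 0 ≤ e k := fun k => by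
    have := hmin (X k) (hmem k); simp only [he]; linarith
  -- key inequality
  have key : ∀ k, 2 * α * e (k + 1) ≤ ‖X k - Xbar‖ ^ 2 - ‖X (k + 1) - Xbar‖ ^ 2 := by
    intro k
    have hv := hvar (X k - α • G) Xbar hXbar
    rw [← hiter k] at hv
    set a := X k - Xbar
    set b := X (k + 1) - Xbar
    have hab : X k - α • G - X (k + 1) = a - α • G - b := by
      simp only [a, b]; abel
    have hzb : Xbar - X (k + 1) = -b := by simp only [b]; abel
    rw [hab, hzb] at hv
    have hv' : ‖b‖ ^ 2 + α * ⟪G, b⟫ ≤ ⟪a, b⟫ := by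
      have : ⟪a - α • G - b, -b⟫ = -(⟪a, b⟫ - α * ⟪G, b⟫ - ‖b‖ ^ 2) := by
        simp [inner_sub_left, inner_smul_left, real_inner_self_eq_norm_sq,
          inner_neg_right]
      rw [this] at hv
      linarith
    have hcs : ⟪a, b⟫ ≤ ‖a‖ * ‖b‖ := real_inner_le_norm a b
    have heb : e (k + 1) = ⟪G, b⟫ := by
      simp only [he, b, inner_sub_right]
    rw [heb]
    nlinarith [norm_nonneg a, norm_nonneg b, sq_nonneg (‖a‖ - ‖b‖)]
  -- summability
  have hsum : Summable (fun k => 2 * α * e (k + 1)) := by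
    apply summable_of_sum_range_le (c := ‖X 0 - Xbar‖ ^ 2)
      (fun k => mul_nonneg (by positivity) (he_nonneg _))
    intro n
    have : ∑ i ∈ Finset.range n, (2 * α * e (i + 1))
        ≤ ∑ i ∈ Finset.range n, (‖X i - Xbar‖ ^ 2 - ‖X (i + 1) - Xbar‖ ^ 2) :=
      Finset.sum_le_sum fun i _ => key i
    rw [Finset.sum_range_sub' (fun i => ‖X i - Xbar‖ ^ 2)] at this
    nlinarith [sq_nonneg ‖X n - Xbar‖]
  have h0 : Filter.Tendsto (fun k => 2 * α * e (k + 1)) Filter.atTop (nhds 0) :=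
    hsum.tendsto_atTop_zero
  have h1 : Filter.Tendsto (fun k => e (k + 1)) Filter.atTop (nhds 0) := by
    have := h0.const_mul (1 / (2 * α))
    simp only [mul_zero] at this
    convert this using 2 with k
    field_simp
  have h2 : Filter.Tendsto e Filter.atTop (nhds 0) := by
    rwa [← Filter.tendsto_add_atTop_iff_nat 1]
  have := h2.add_const (⟪G, Xbar⟫ + c)
  rw [zero_add] at this
  convert this using 2 with k
  ring
end
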